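/- arXiv:2604.21676 — 4 statements merged into one kernel-verified Lean document; each statement's English description precedes it below -/
import Mathlib

section
/- Let ν ≥ 1, φ ∈ (0,1], and define the marginal density p(β|φ) = ∫₀^∞ (2/√(2πλ²)) exp(−β²/(2λ²)) · t⁺_ν(λ; 0, φ) dλ, where t⁺_ν(·;0,φ) is the half-t density with ν degrees of freedom and scale φ. Then lim_{β→0} p(β|φ) = ∞. -/
open Real MeasureTheory Filter Set

/-- Half-t density with `ν` degrees of freedom and scale `φ` on `(0,∞)`. -/
noncomputable def halfTPdf (ν φ l : ℝ) : ℝ :=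
  (2 / φ) * (Real.Gamma ((ν + 1) / 2) / (Real.Gamma (ν / 2) * Real.sqrt (ν * Real.pi))) *
    (1 + l ^ 2 / (ν * φ ^ 2)) ^ (-(ν + 1) / 2)

/-- Marginal density of the half-t horseshoe prior: half-normal scale mixture of half-t. -/
noncomputable def hthsMarginal (ν φ β : ℝ) : ℝ :=
  ∫ l in Ioi (0 : ℝ),
    (2 / Real.sqrt (2 * Real.pi * l ^ 2)) * Real.exp (-β ^ 2 / (2 * l ^ 2)) * halfTPdf ν φ l

namespace HTHS

variable {ν φ : ℝ}

/-- the constant in front of the half-t pdf -/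
noncomputable def cc (ν φ : ℝ) : ℝ :=
  (2 / φ) * (Real.Gamma ((ν + 1) / 2) / (Real.Gamma (ν / 2) * Real.sqrt (ν * Real.pi)))

lemma cc_pos (hν : 1 ≤ ν) (hφ : 0 < φ) : 0 < cc ν φ := by
  have hν0 : (0:ℝ) < ν := lt_of_lt_of_le one_pos hν
  have h1 : 0 < Real.Gamma ((ν+1)/2) := Real.Gamma_pos_of_pos (by linarith)
  have h2 : 0 < Real.Gamma (ν/2) := Real.Gamma_pos_of_pos (by linarith)
  have h3 : 0 < Real.sqrt (ν * Real.pi) := Real.sqrt_pos.2 (by positivity)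
  exact mul_pos (by positivity) (div_pos h1 (mul_pos h2 h3))

lemma halfT_eq (l : ℝ) :
    halfTPdf ν φ l = cc ν φ * (1 + l ^ 2 / (ν * φ ^ 2)) ^ (-(ν + 1) / 2) := rfl

lemma halfT_pos (hν : 1 ≤ ν) (hφ : 0 < φ) (l : ℝ) : 0 < halfTPdf ν φ l := by
  have hν0 : (0:ℝ) < ν := lt_of_lt_of_le one_pos hν
  have hb : 0 < 1 + l^2/(ν*φ^2) := by positivity
  exact mul_pos (cc_pos hν hφ) (Real.rpow_pos_of_pos hb _)

/-- the integrand -/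
noncomputable def f (ν φ β l : ℝ) : ℝ :=
  (2 / Real.sqrt (2 * Real.pi * l ^ 2)) * Real.exp (-β ^ 2 / (2 * l ^ 2)) * halfTPdf ν φ l

lemma f_nonneg (hν : 1 ≤ ν) (hφ : 0 < φ) (β l : ℝ) : 0 ≤ f ν φ β l := by
  have h := halfT_pos (φ := φ) hν hφ l
  have : (0:ℝ) ≤ 2 / Real.sqrt (2 * Real.pi * l ^ 2) := by positivity
  exact mul_nonneg (mul_nonneg this (Real.exp_nonneg _)) h.le

lemma sqrt_eq {l : ℝ} (hl : 0 < l) :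
    Real.sqrt (2 * Real.pi * l ^ 2) = Real.sqrt (2 * Real.pi) * l := by
  rw [Real.sqrt_mul (by positivity), Real.sqrt_sq hl.le]

lemma f_cont (β : ℝ) (hν : 1 ≤ ν) (hφ : 0 < φ) : ContinuousOn (f ν φ β) (Ioi 0) := by
  have hν0 : (0:ℝ) < ν := lt_of_lt_of_le one_pos hν
  have h1 : ContinuousOn (fun l : ℝ => 2 / Real.sqrt (2 * Real.pi * l ^ 2)) (Ioi 0) := by
    apply continuousOn_const.div
    · exact (Real.continuous_sqrt.comp (by continuity)).continuousOn
    · intro l hl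
      have : (0:ℝ) < l := hl
      positivity
  have h2 : ContinuousOn (fun l : ℝ => Real.exp (-β ^ 2 / (2 * l ^ 2))) (Ioi 0) := by
    apply Real.continuous_exp.comp_continuousOn
    apply continuousOn_const.div (Continuous.continuousOn (by continuity))
    intro l hl
    have : (0:ℝ) < l := hl
    positivity
  have h3 : ContinuousOn (fun l : ℝ => halfTPdf ν φ l) (Ioi 0) := by
    simp only [halfT_eq]
    apply continuousOn_const.mul
    apply ContinuousOn.rpow_const
    · apply continuousOn_const.add (ContinuousOn.div (Continuous.continuousOn (by continuity)) continuousOn_const _)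
      intro l _
      positivity
    · intro l _
      left
      have : (0:ℝ) < 1 + l^2/(ν*φ^2) := by positivity
      exact this.ne'
  exact (h1.mul h2).mul h3

lemma f_integrable (hν : 1 ≤ ν) (hφ : 0 < φ) {β : ℝ} (hβ : β ≠ 0) :
    IntegrableOn (f ν φ β) (Ioi 0) := by
  have hν0 : (0:ℝ) < ν := lt_of_lt_of_le one_pos hν
  have hβ2 : 0 < β ^ 2 := by positivity
  have hsπ : 0 < Real.sqrt (2 * Real.pi) := by positivity
  have hIoi : Ioi (0:ℝ) = Ioc 0 1 ∪ Ioi 1 := by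
    rw [Ioc_union_Ioi_eq_Ioi]; norm_num
  rw [hIoi]
  apply IntegrableOn.union
  · -- on (0,1]: f l ≤ A * l
    set A : ℝ := (2 / Real.sqrt (2 * Real.pi)) * (2 / β ^ 2) * cc ν φ with hA
    apply Integrable.mono' (g := fun l => A * l)
    · exact (continuous_const.mul continuous_id).integrableOn_Icc.mono_set
        (by intro x hx; exact ⟨hx.1.le, hx.2⟩)
    · exact ((f_cont β hν hφ).mono (fun x hx => hx.1)).aestronglyMeasurable measurableSet_Ioc
    · rw [ae_restrict_iff' measurableSet_Ioc]
      refine ae_of_all _ (fun l hl => ?_)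
      obtain ⟨hl0, hl1⟩ := hl
      rw [Real.norm_of_nonneg (f_nonneg hν hφ β l)]
      have hexp : Real.exp (-β ^ 2 / (2 * l ^ 2)) ≤ 2 * l ^ 2 / β ^ 2 := by
        have hx : 0 < β ^ 2 / (2 * l ^ 2) := by positivity
        have h1 : β ^ 2 / (2 * l ^ 2) ≤ Real.exp (β ^ 2 / (2 * l ^ 2)) := by
          linarith [Real.add_one_le_exp (β ^ 2 / (2 * l ^ 2))]
        have h2 : Real.exp (-β ^ 2 / (2 * l ^ 2)) = (Real.exp (β ^ 2 / (2 * l ^ 2)))⁻¹ := by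
          rw [← Real.exp_neg]; ring_nf
        rw [h2]
        have := inv_anti₀ hx h1
        calc (Real.exp (β ^ 2 / (2 * l ^ 2)))⁻¹ ≤ (β ^ 2 / (2 * l ^ 2))⁻¹ := this
          _ = 2 * l ^ 2 / β ^ 2 := by rw [inv_div]
      have hhT : halfTPdf ν φ l ≤ cc ν φ := by
        rw [halfT_eq]
        nth_rewrite 2 [← mul_one (cc ν φ)]
        apply mul_le_mul_of_nonneg_left _ (cc_pos hν hφ).le
        apply Real.rpow_le_one_of_one_le_of_nonpos
        · have : 0 ≤ l^2/(ν*φ^2) := by positivity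
          linarith
        · linarith
      have key : f ν φ β l ≤ (2 / (Real.sqrt (2 * Real.pi) * l)) * (2 * l ^ 2 / β ^ 2) * cc ν φ := by
        unfold f
        rw [sqrt_eq hl0]
        have ha1 : (0:ℝ) ≤ 2 / (Real.sqrt (2 * Real.pi) * l) := by positivity
        apply mul_le_mul _ hhT (halfT_pos hν hφ l).le (by positivity)
        exact mul_le_mul_of_nonneg_left hexp ha1
      calc f ν φ β l ≤ (2 / (Real.sqrt (2 * Real.pi) * l)) * (2 * l ^ 2 / β ^ 2) * cc ν φ := key
        _ = A * l := by rw [hA]; field_simp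
  · -- on (1,∞): f l ≤ B * l ^ (-3)
    set B : ℝ := (2 / Real.sqrt (2 * Real.pi)) * cc ν φ * (ν * φ ^ 2) with hB
    apply Integrable.mono' (g := fun l => B * l ^ (-3 : ℝ))
    · exact (integrableOn_Ioi_rpow_of_lt (by norm_num) one_pos).const_mul B
    · exact ((f_cont β hν hφ).mono (t := Ioi (1:ℝ)) (fun x (hx : x ∈ Ioi (1:ℝ)) => Set.mem_Ioi.mpr (lt_trans one_pos (Set.mem_Ioi.mp hx)))).aestronglyMeasurable
        measurableSet_Ioi
    · rw [ae_restrict_iff' measurableSet_Ioi]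
      refine ae_of_all _ (fun l hl => ?_)
      have hl1 : (1:ℝ) < l := hl
      have hl0 : (0:ℝ) < l := lt_trans one_pos hl1
      rw [Real.norm_of_nonneg (f_nonneg hν hφ β l)]
      have hexp : Real.exp (-β ^ 2 / (2 * l ^ 2)) ≤ 1 := by
        rw [Real.exp_le_one_iff]
        have : 0 ≤ β ^ 2 / (2 * l ^ 2) := by positivity
        have h : -β ^ 2 / (2 * l ^ 2) = -(β ^ 2 / (2 * l ^ 2)) := by ring
        rw [h]; linarith
      have hhT : halfTPdf ν φ l ≤ cc ν φ * (ν * φ ^ 2 / l ^ 2) := by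
        rw [halfT_eq]
        apply mul_le_mul_of_nonneg_left _ (cc_pos hν hφ).le
        have hx : 0 < l ^ 2 / (ν * φ ^ 2) := by positivity
        have h1 : (1 + l ^ 2 / (ν * φ ^ 2)) ^ (-(ν + 1) / 2)
            ≤ (1 + l ^ 2 / (ν * φ ^ 2)) ^ (-1 : ℝ) := by
          apply Real.rpow_le_rpow_of_exponent_le (by linarith) (by linarith)
        have h2 : (1 + l ^ 2 / (ν * φ ^ 2)) ^ (-1 : ℝ) ≤ ν * φ ^ 2 / l ^ 2 := by
          rw [Real.rpow_neg_one]
          calc (1 + l ^ 2 / (ν * φ ^ 2))⁻¹ ≤ (l ^ 2 / (ν * φ ^ 2))⁻¹ :=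
              inv_anti₀ hx (by linarith)
            _ = ν * φ ^ 2 / l ^ 2 := by rw [inv_div]
        linarith
      have key : f ν φ β l ≤ (2 / (Real.sqrt (2 * Real.pi) * l)) * 1 * (cc ν φ * (ν * φ ^ 2 / l ^ 2)) := by
        unfold f
        rw [sqrt_eq hl0]
        have ha1 : (0:ℝ) ≤ 2 / (Real.sqrt (2 * Real.pi) * l) := by positivity
        apply mul_le_mul _ hhT (halfT_pos hν hφ l).le (by positivity)
        exact mul_le_mul_of_nonneg_left hexp ha1
      have hrpow : l ^ (-3 : ℝ) = (l ^ 3)⁻¹ := by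
        rw [show (-3 : ℝ) = ((-3 : ℤ) : ℝ) by norm_num, Real.rpow_intCast, zpow_neg,
          zpow_ofNat]
      calc f ν φ β l ≤ (2 / (Real.sqrt (2 * Real.pi) * l)) * 1 * (cc ν φ * (ν * φ ^ 2 / l ^ 2)) := key
        _ = B * l ^ (-3 : ℝ) := by rw [hB, hrpow]; field_simp

/-- the key constant for the lower bound -/
noncomputable def K (ν φ : ℝ) : ℝ :=
  (2 / Real.sqrt (2 * Real.pi)) * Real.exp (-(1:ℝ)/2) * cc ν φ *
    (1 + 1 / (ν * φ ^ 2)) ^ (-(ν + 1) / 2)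

lemma K_pos (hν : 1 ≤ ν) (hφ : 0 < φ) : 0 < K ν φ := by
  have hν0 : (0:ℝ) < ν := lt_of_lt_of_le one_pos hν
  have h1 : (0:ℝ) < 1 + 1 / (ν * φ ^ 2) := by positivity
  have := cc_pos hν hφ
  have h2 := Real.rpow_pos_of_pos h1 (-(ν + 1) / 2)
  unfold K
  positivity

lemma lower_bound (hν : 1 ≤ ν) (hφ : 0 < φ) {β : ℝ} (hβ0 : β ≠ 0) (hβ1 : |β| < 1) :
    K ν φ * (-Real.log |β|) ≤ hthsMarginal ν φ β := by
  have hν0 : (0:ℝ) < ν := lt_of_lt_of_le one_pos hν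
  set a := |β| with ha
  have ha0 : 0 < a := abs_pos.mpr hβ0
  have ha1 : a ≤ 1 := hβ1.le
  have hsπ : 0 < Real.sqrt (2 * Real.pi) := by positivity
  -- pointwise lower bound on Ioc a 1
  have hpt : ∀ l ∈ Ioc a 1, K ν φ * l⁻¹ ≤ f ν φ β l := by
    intro l hl
    obtain ⟨hal, hl1⟩ := hl
    have hl0 : 0 < l := lt_trans ha0 hal
    have hβl : β ^ 2 ≤ l ^ 2 := by
      have h : a ^ 2 ≤ l ^ 2 := by nlinarith
      calc β ^ 2 = a ^ 2 := (sq_abs β).symm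
        _ ≤ l ^ 2 := h
    have hexp : Real.exp (-(1:ℝ)/2) ≤ Real.exp (-β ^ 2 / (2 * l ^ 2)) := by
      apply Real.exp_le_exp.2
      rw [div_le_div_iff₀ (by norm_num) (by positivity)]
      nlinarith
    have hhT : cc ν φ * (1 + 1 / (ν * φ ^ 2)) ^ (-(ν + 1) / 2) ≤ halfTPdf ν φ l := by
      rw [halfT_eq]
      apply mul_le_mul_of_nonneg_left _ (cc_pos hν hφ).le
      apply Real.rpow_le_rpow_of_nonpos (by positivity)
      · have h : l ^ 2 / (ν * φ ^ 2) ≤ 1 / (ν * φ ^ 2) := by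
          apply div_le_div_of_nonneg_right _ (by positivity)
          nlinarith
        linarith
      · linarith
    have hc := cc_pos hν hφ
    have hr : (0:ℝ) < (1 + 1 / (ν * φ ^ 2)) ^ (-(ν + 1) / 2) :=
      Real.rpow_pos_of_pos (by positivity) _
    have key : (2 / (Real.sqrt (2 * Real.pi) * l)) * Real.exp (-(1:ℝ)/2) *
        (cc ν φ * (1 + 1 / (ν * φ ^ 2)) ^ (-(ν + 1) / 2)) ≤ f ν φ β l := by
      unfold f
      rw [sqrt_eq hl0]
      have ha1' : (0:ℝ) ≤ 2 / (Real.sqrt (2 * Real.pi) * l) := by positivity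
      apply mul_le_mul _ hhT (by positivity) (by positivity)
      exact mul_le_mul_of_nonneg_left hexp ha1'
    calc K ν φ * l⁻¹
        = (2 / (Real.sqrt (2 * Real.pi) * l)) * Real.exp (-(1:ℝ)/2) *
          (cc ν φ * (1 + 1 / (ν * φ ^ 2)) ^ (-(ν + 1) / 2)) := by
          unfold K; field_simp
      _ ≤ f ν φ β l := key
  -- integrability of the lower bound
  have hKl_int : IntegrableOn (fun l : ℝ => K ν φ * l⁻¹) (Ioc a 1) := by
    apply ContinuousOn.integrableOn_Icc (a := a) (b := 1) _ |>.mono_set Ioc_subset_Icc_self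
    apply continuousOn_const.mul
    apply ContinuousOn.inv₀ continuousOn_id
    intro x hx
    exact ne_of_gt (lt_of_lt_of_le ha0 hx.1)
  have hf_int := f_integrable (φ := φ) hν hφ hβ0
  -- evaluate the lower integral
  have hval : ∫ l in Ioc a 1, K ν φ * l⁻¹ = K ν φ * (-Real.log a) := by
    rw [MeasureTheory.integral_const_mul]
    congr 1
    rw [← intervalIntegral.integral_of_le ha1, integral_inv]
    · rw [one_div, Real.log_inv]
    · rw [Set.uIcc_of_le ha1]
      intro h
      exact absurd h.1 (by linarith)
  have h2 : ∫ l in Ioc a 1, K ν φ * l⁻¹ ≤ ∫ l in Ioc a 1, f ν φ β l :=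
    setIntegral_mono_on hKl_int (hf_int.mono_set (fun x hx => lt_trans ha0 hx.1))
      measurableSet_Ioc hpt
  have h3 : ∫ l in Ioc a 1, f ν φ β l ≤ ∫ l in Ioi 0, f ν φ β l := by
    apply setIntegral_mono_set hf_int
    · exact Filter.Eventually.of_forall (fun l => f_nonneg hν hφ β l)
    · exact HasSubset.Subset.eventuallyLE (fun x hx => lt_trans ha0 hx.1)
  have : hthsMarginal ν φ β = ∫ l in Ioi 0, f ν φ β l := rfl
  rw [this, ← hval]
  exact le_trans h2 h3

end HTHS

theorem stmt0 (ν φ : ℝ) (hν : 1 ≤ ν) (hφ : φ ∈ Set.Ioc (0 : ℝ) 1) :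
    Tendsto (fun β => hthsMarginal ν φ β) (nhdsWithin 0 {(0 : ℝ)}ᶜ) atTop := by
  have hK := HTHS.K_pos hν hφ.1
  have habs : Tendsto (fun β : ℝ => |β|) (nhdsWithin 0 {(0:ℝ)}ᶜ) (nhdsWithin 0 (Ioi 0)) := by
    apply tendsto_nhdsWithin_of_tendsto_nhds_of_eventually_within
    · have h : Tendsto (fun β : ℝ => |β|) (nhdsWithin 0 {(0:ℝ)}ᶜ) (nhds |(0:ℝ)|) :=
        (continuous_abs.tendsto (0:ℝ)).mono_left nhdsWithin_le_nhds
      simpa using h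
    · filter_upwards [self_mem_nhdsWithin] with β hβ
      exact abs_pos.mpr hβ
  have hlog : Tendsto (fun β : ℝ => HTHS.K ν φ * (-Real.log |β|))
      (nhdsWithin 0 {(0:ℝ)}ᶜ) atTop := by
    apply Tendsto.const_mul_atTop hK
    exact tendsto_neg_atBot_atTop.comp (Real.tendsto_log_nhdsGT_zero.comp habs)
  apply tendsto_atTop_mono' _ _ hlog
  have hev : ∀ᶠ β in nhds (0:ℝ), |β| < 1 := by
    have := eventually_abs_sub_lt (0:ℝ) one_pos
    simpa using this
  filter_upwards [self_mem_nhdsWithin, hev.filter_mono nhdsWithin_le_nhds] with β hβ0 hβ1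
  exact HTHS.lower_bound hν hφ.1 hβ0 hβ1
end

section
/- The Vecchia/NNGP density p̃(w) = ∏_{i=1}^n p(w_i | w_{N(t_i)}) constructed from a multivariate Gaussian N(0, K) is itself a multivariate Gaussian density N(0, C̃) for some positive definite matrix C̃, and the precision matrix C̃^{-1} satisfies (C̃^{-1})_{ij} = 0 whenever i ≠ j and there is no k such that both i and j belong to N(t_k) ∪ {k}. -/
open MeasureTheory Finset Matrix

private lemma sqrt_prod' {ι : Type*} (s : Finset ι) (f : ι → ℝ) (hf : ∀ i ∈ s, 0 ≤ f i) :
    Real.sqrt (∏ i ∈ s, f i) = ∏ i ∈ s, Real.sqrt (f i) := by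
  induction s using Finset.cons_induction with
  | empty => simp
  | cons a s ha ih =>
    rw [Finset.prod_cons, Finset.prod_cons, Real.sqrt_mul (hf a (Finset.mem_cons_self a s)),
      ih (fun i hi => hf i (Finset.mem_cons_of_mem hi))]

/-- The Vecchia/NNGP density, written via the regressions `w i = ∑ j A i j * w j + η i`
with `A` supported on neighbor sets `N i ⊆ {0, …, i-1}` and conditional variances `d i`,
is a multivariate Gaussian density `N(0, C̃)` with positive definite `C̃`, and the
precision matrix `C̃⁻¹` vanishes at `(i,j)`, `i ≠ j`, whenever no node `k` has both
`i` and `j` in `N k ∪ {k}`. -/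
theorem stmt7 (n : ℕ) (N : Fin n → Finset (Fin n)) (hN : ∀ i, N i ⊆ Finset.Iio i)
    (A : Matrix (Fin n) (Fin n) ℝ) (hA : ∀ i j, A i j ≠ 0 → j ∈ N i)
    (d : Fin n → ℝ) (hd : ∀ i, 0 < d i) :
    ∃ C : Matrix (Fin n) (Fin n) ℝ, C.PosDef ∧
      (∀ w : Fin n → ℝ,
        (∏ i, (1 / Real.sqrt (2 * Real.pi * d i)) *
            Real.exp (-(w i - ∑ j, A i j * w j) ^ 2 / (2 * d i))) =
          (1 / Real.sqrt ((2 * Real.pi) ^ n * C.det)) *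
            Real.exp (-(w ⬝ᵥ C⁻¹.mulVec w) / 2)) ∧
      (∀ i j : Fin n, i ≠ j →
        (¬ ∃ k : Fin n, (i ∈ N k ∨ i = k) ∧ (j ∈ N k ∨ j = k)) → C⁻¹ i j = 0) := by
  classical
  have hAlt : ∀ i j : Fin n, A i j ≠ 0 → j < i := fun i j h =>
    Finset.mem_Iio.mp (hN i (hA i j h))
  set B : Matrix (Fin n) (Fin n) ℝ := 1 - A with hBdef
  have hBapp : ∀ i j, B i j = (if i = j then (1:ℝ) else 0) - A i j := by
    intro i j; simp [hBdef, Matrix.one_apply]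
  have hBtri : B.BlockTriangular OrderDual.toDual := by
    intro i j hij
    rw [OrderDual.toDual_lt_toDual] at hij
    have hA0 : A i j = 0 := by
      by_contra h; exact absurd (hAlt i j h) (not_lt.mpr hij.le)
    rw [hBapp, hA0, if_neg hij.ne]
    ring
  have hBdiag : ∀ i, B i i = 1 := by
    intro i
    have hA0 : A i i = 0 := by
      by_contra h; exact absurd (hAlt i i h) (lt_irrefl i)
    rw [hBapp, hA0, if_pos rfl]; ring
  have hdetB : B.det = 1 := by
    rw [Matrix.det_of_lowerTriangular B hBtri]
    simp [hBdiag]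
  set E : Matrix (Fin n) (Fin n) ℝ := Matrix.diagonal (fun i => (d i)⁻¹) with hEdef
  set P : Matrix (Fin n) (Fin n) ℝ := Bᵀ * E * B with hPdef
  have hBv : ∀ (w : Fin n → ℝ) (i : Fin n),
      (B *ᵥ w) i = w i - ∑ j, A i j * w j := by
    intro w i
    rw [hBdef, Matrix.sub_mulVec, Matrix.one_mulVec, Pi.sub_apply]
    simp [Matrix.mulVec, dotProduct]
  have hqf : ∀ w : Fin n → ℝ,
      w ⬝ᵥ P *ᵥ w = ∑ i, (B *ᵥ w) i * ((d i)⁻¹ * (B *ᵥ w) i) := by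
    intro w
    rw [hPdef, ← Matrix.mulVec_mulVec, ← Matrix.mulVec_mulVec,
      Matrix.dotProduct_mulVec, Matrix.vecMul_transpose]
    simp [dotProduct, hEdef, Matrix.mulVec_diagonal]
  have hquad : ∀ w : Fin n → ℝ,
      w ⬝ᵥ P *ᵥ w = ∑ i, (w i - ∑ j, A i j * w j) ^ 2 / d i := by
    intro w
    rw [hqf w]
    refine Finset.sum_congr rfl fun i _ => ?_
    rw [hBv w i]
    have := (hd i).ne'
    field_simp
  have hBunit : IsUnit B.det := by rw [hdetB]; exact isUnit_one
  have hBinj : ∀ w : Fin n → ℝ, B *ᵥ w = 0 → w = 0 := by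
    intro w hw
    have h : B⁻¹ *ᵥ (B *ᵥ w) = w := by
      rw [Matrix.mulVec_mulVec, Matrix.nonsing_inv_mul B hBunit, Matrix.one_mulVec]
    rw [hw, Matrix.mulVec_zero] at h
    exact h.symm
  have hPd : P.PosDef := by
    rw [Matrix.posDef_iff_dotProduct_mulVec]
    constructor
    · have hBH : Bᴴ = Bᵀ := by ext i j; simp [Matrix.conjTranspose_apply]
      have h := Matrix.isHermitian_conjTranspose_mul_mul B
        (Matrix.isHermitian_diagonal (fun i => (d i)⁻¹))
      rwa [hBH, ← hEdef, ← hPdef] at h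
    · intro x hx
      have hstar : star x = x := by ext i; simp
      rw [hstar, hqf x]
      have hux : B *ᵥ x ≠ 0 := fun h => hx (hBinj x h)
      obtain ⟨i0, hi0⟩ : ∃ i, (B *ᵥ x) i ≠ 0 := by
        by_contra h; push_neg at h; exact hux (funext h)
      refine Finset.sum_pos' (fun i _ => ?_) ⟨i0, Finset.mem_univ i0, ?_⟩
      · have h1 : (0:ℝ) ≤ (d i)⁻¹ := inv_nonneg.mpr (hd i).le
        nlinarith [sq_nonneg ((B *ᵥ x) i)]
      · have h1 : (0:ℝ) < (d i0)⁻¹ := inv_pos.mpr (hd i0)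
        have h2 : 0 < (B *ᵥ x) i0 * (B *ᵥ x) i0 := mul_self_pos.mpr hi0
        nlinarith
  have hdetP : P.det = ∏ i, (d i)⁻¹ := by
    rw [hPdef, Matrix.det_mul, Matrix.det_mul, Matrix.det_transpose, hdetB, hEdef,
      Matrix.det_diagonal]
    ring
  refine ⟨P⁻¹, hPd.inv, ?_, ?_⟩
  · -- density identity
    have hCinv : (P⁻¹)⁻¹ = P := Matrix.nonsing_inv_nonsing_inv P hPd.det_pos.ne'.isUnit
    have hdetC : (P⁻¹).det = ∏ i, d i := by
      rw [Matrix.det_nonsing_inv, hdetP, Ring.inverse_eq_inv', ← Finset.prod_inv_distrib]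
      simp
    intro w
    rw [hCinv, hdetC, hquad w]
    have hprodpos : ∀ i : Fin n, (0:ℝ) ≤ 2 * Real.pi * d i := fun i => by
      have := (hd i).le; positivity
    have h2 : ((2 : ℝ) * Real.pi) ^ n * ∏ i, d i = ∏ i : Fin n, (2 * Real.pi * d i) := by
      rw [Finset.prod_mul_distrib, Finset.prod_const, Finset.card_univ, Fintype.card_fin]
    rw [h2, sqrt_prod' _ _ (fun i _ => hprodpos i)]
    rw [Finset.prod_mul_distrib, ← Real.exp_sum]
    congr 1
    · rw [Finset.prod_div_distrib, Finset.prod_const_one]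
    · have hterm : ∀ i : Fin n, -(w i - ∑ j, A i j * w j) ^ 2 / (2 * d i)
          = -((w i - ∑ j, A i j * w j) ^ 2 / d i) / 2 := fun i => by
        rw [neg_div, neg_div, div_div, mul_comm]
      congr 1
      rw [Finset.sum_congr rfl fun i _ => hterm i, ← Finset.sum_div,
        Finset.sum_neg_distrib, neg_div]
  · -- sparsity
    intro i j hij hnk
    push_neg at hnk
    have hCinv : (P⁻¹)⁻¹ = P := Matrix.nonsing_inv_nonsing_inv P hPd.det_pos.ne'.isUnit
    rw [hCinv]
    have hPij : P i j = ∑ k, B k i * ((d k)⁻¹ * B k j) := by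
      rw [hPdef, mul_assoc, Matrix.mul_apply]
      refine Finset.sum_congr rfl fun k _ => ?_
      rw [Matrix.transpose_apply, hEdef, Matrix.diagonal_mul]
    rw [hPij]
    refine Finset.sum_eq_zero fun k _ => ?_
    by_cases hki : B k i = 0
    · rw [hki]; ring
    · have hik : i ∈ N k ∨ i = k := by
        by_cases hkeq : k = i
        · exact Or.inr hkeq.symm
        · left
          apply hA k i
          intro hA0
          apply hki
          rw [hBapp, hA0, if_neg hkeq]; ring
      have hjcond := hnk k hik
      have hkj : B k j = 0 := by
        have hAkj : A k j = 0 := by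
          by_contra h
          exact hjcond.1 (hA k j h)
        have hkneq : k ≠ j := fun h => hjcond.2 h.symm
        rw [hBapp, hAkj, if_neg hkneq]; ring
      rw [hkj]; ring
end

section
/- For a strictly lower triangular matrix A ∈ ℝ^{n×n} where row i has at most m nonzero entries, and diagonal D with positive entries, the precision matrix Q = (I − A)^⊤ D^{-1} (I − A) has at most n(2m + 1) + n·m² nonzero entries; in particular the number of nonzeros is O(n m²). -/
open Matrix Finset

/-!
Write `B = 1 - A`, so that `Q = Bᵀ D⁻¹ B` and `Q i j = ∑ₖ B k i * (d k)⁻¹ * B k j`. An entry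
`Q i j` can only be nonzero if `i` and `j` both lie in the support of some row `k` of `B`,
which is contained in `{k} ∪ supp (A k ·)` and so has at most `m + 1` elements. Hence the
support of `Q` is covered by `n` squares of side at most `m + 1`, and
`n (m + 1)² = n (2m + 1) + n m²`.
-/

namespace Matrix

variable {κ ι R : Type*} [Fintype κ]

theorem transpose_mul_diagonal_mul_apply [NonUnitalNonAssocSemiring R] [DecidableEq κ]
    (B : Matrix κ ι R) (d : κ → R) (i j : ι) :
    (Bᵀ * diagonal d * B) i j = ∑ k, B k i * d k * B k j := by
  rw [mul_apply]
  simp only [mul_diagonal, transpose_apply]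

theorem exists_ne_zero_of_transpose_mul_diagonal_mul_apply_ne_zero
    [NonUnitalNonAssocSemiring R] [DecidableEq κ] {B : Matrix κ ι R} {d : κ → R} {i j : ι}
    (h : (Bᵀ * diagonal d * B) i j ≠ 0) : ∃ k, B k i ≠ 0 ∧ B k j ≠ 0 := by
  rw [transpose_mul_diagonal_mul_apply] at h
  obtain ⟨k, -, hk⟩ := Finset.exists_ne_zero_of_sum_ne_zero h
  exact ⟨k, fun hi => hk (by simp [hi]), fun hj => hk (by simp [hj])⟩

theorem card_support_transpose_mul_diagonal_mul_le [Fintype ι] [NonUnitalNonAssocSemiring R]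
    [DecidableEq κ] [DecidableEq ι] [DecidableEq R] {B : Matrix κ ι R} {r : ℕ}
    (hB : ∀ k, #{j | B k j ≠ 0} ≤ r) (d : κ → R) :
    #{p : ι × ι | (Bᵀ * diagonal d * B) p.1 p.2 ≠ 0} ≤ Fintype.card κ * r ^ 2 := by
  have hcover : univ.filter (fun p : ι × ι => (Bᵀ * diagonal d * B) p.1 p.2 ≠ 0)
      ⊆ univ.biUnion fun k => (univ.filter (B k · ≠ 0)) ×ˢ (univ.filter (B k · ≠ 0)) := by
    intro p hp
    obtain ⟨k, hk₁, hk₂⟩ :=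
      exists_ne_zero_of_transpose_mul_diagonal_mul_apply_ne_zero (mem_filter.mp hp).2
    simpa using ⟨k, hk₁, hk₂⟩
  calc #{p : ι × ι | (Bᵀ * diagonal d * B) p.1 p.2 ≠ 0}
      ≤ ∑ k, #((univ.filter (B k · ≠ 0)) ×ˢ (univ.filter (B k · ≠ 0))) :=
        (card_le_card hcover).trans card_biUnion_le
    _ ≤ ∑ _k : κ, r ^ 2 := by
        gcongr with k
        rw [card_product, sq]
        exact Nat.mul_le_mul (hB k) (hB k)
    _ = Fintype.card κ * r ^ 2 := by simp

theorem card_support_one_sub_row_le [Fintype ι] [DecidableEq ι] [AddGroupWithOne R]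
    [DecidableEq R] (A : Matrix ι ι R) (k : ι) :
    #{j | (1 - A) k j ≠ 0} ≤ #{j | A k j ≠ 0} + 1 := by
  refine (card_le_card fun j hj => ?_).trans (card_insert_le k _)
  rcases eq_or_ne k j with rfl | hkj
  · exact mem_insert_self _ _
  · refine mem_insert_of_mem (mem_filter.mpr ⟨mem_univ _, fun hA => ?_⟩)
    exact (mem_filter.mp hj).2 (by simp [one_apply_ne hkj, hA])

end Matrix

theorem stmt8_general (n m : ℕ) (A : Matrix (Fin n) (Fin n) ℝ)
    (hrow : ∀ i : Fin n, (Finset.univ.filter (fun j => A i j ≠ 0)).card ≤ m)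
    (d : Fin n → ℝ) :
    let Q : Matrix (Fin n) (Fin n) ℝ :=
      (1 - A)ᵀ * Matrix.diagonal (fun i => (d i)⁻¹) * (1 - A)
    ((Finset.univ : Finset (Fin n × Fin n)).filter (fun p => Q p.1 p.2 ≠ 0)).card
      ≤ n * (2 * m + 1) + n * m ^ 2 := by
  intro Q
  have hB (k : Fin n) : #{j | (1 - A) k j ≠ 0} ≤ m + 1 :=
    (card_support_one_sub_row_le A k).trans (Nat.add_le_add_right (hrow k) 1)
  calc #{p : Fin n × Fin n | Q p.1 p.2 ≠ 0} ≤ Fintype.card (Fin n) * (m + 1) ^ 2 :=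
        card_support_transpose_mul_diagonal_mul_le hB _
    _ = n * (2 * m + 1) + n * m ^ 2 := by rw [Fintype.card_fin]; ring

/-- Sparsity of the NNGP precision matrix `Q = (I − A)ᵀ D⁻¹ (I − A)`: if `A` is strictly
lower triangular with at most `m` nonzero entries per row and `D` is diagonal with positive
entries, then `Q` has at most `n(2m+1) + nm²` nonzero entries. -/
theorem stmt8 (n m : ℕ) (A : Matrix (Fin n) (Fin n) ℝ)
    (hlow : ∀ i j : Fin n, i ≤ j → A i j = 0)
    (hrow : ∀ i : Fin n, (Finset.univ.filter (fun j => A i j ≠ 0)).card ≤ m)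
    (d : Fin n → ℝ) (hd : ∀ i, 0 < d i) :
    let Q : Matrix (Fin n) (Fin n) ℝ :=
      (1 - A)ᵀ * Matrix.diagonal (fun i => (d i)⁻¹) * (1 - A)
    ((Finset.univ : Finset (Fin n × Fin n)).filter (fun p => Q p.1 p.2 ≠ 0)).card
      ≤ n * (2 * m + 1) + n * m ^ 2 :=
  stmt8_general n m A hrow d
end

section
/- If π(λ) is the half-Cauchy density (ν = 1 half-t with scale 1) and y|β ~ N(β,1), β|λ ~ N(0,λ²), then with κ = 1/(1+λ²) the induced prior density of κ on (0,1) is proportional to κ^{-1/2}(1 − κ)^{-1/2}, i.e., κ ~ Beta(1/2, 1/2) — the horseshoe-shaped density. -/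
open MeasureTheory Set

noncomputable def Hfun : ℝ → ENNReal := fun k => ENNReal.ofReal ((1 / Real.pi) * (Real.sqrt (k * (1 - k)))⁻¹)

lemma map_withDensity_comp (ν : Measure ℝ) {f : ℝ → ℝ} {g : ℝ → ENNReal}
    (hf : Measurable f) (hg : Measurable g) :
    Measure.map f (ν.withDensity (fun x => g (f x))) = (Measure.map f ν).withDensity g := by
  ext s hs
  rw [Measure.map_apply hf hs, withDensity_apply _ (hf hs), withDensity_apply _ hs,
    setLIntegral_map hs hg hf]

/-- Under the half-Cauchy prior `λ ~ C⁺(0,1)`, the shrinkage factor `κ = 1/(1+λ²)`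
has the Beta(1/2, 1/2) distribution on (0,1): its density is
`κ^{-1/2}(1−κ)^{-1/2}/π`, the horseshoe-shaped density. -/
theorem stmt15 :
    Measure.map (fun l : ℝ => 1 / (1 + l ^ 2))
        ((volume.restrict (Ioi (0 : ℝ))).withDensity
          (fun l => ENNReal.ofReal ((2 / Real.pi) * (1 + l ^ 2)⁻¹))) =
      (volume.restrict (Ioo (0 : ℝ) 1)).withDensity
        (fun k => ENNReal.ofReal ((1 / Real.pi) * (Real.sqrt (k * (1 - k)))⁻¹)) := by
  set f : ℝ → ℝ := fun l => 1 / (1 + l ^ 2) with hfdef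
  set d : ℝ → ℝ := fun l => -(2 * l) / (1 + l ^ 2) ^ 2 with hddef
  have hpos : ∀ l : ℝ, 0 < 1 + l ^ 2 := fun l => by positivity
  have hfmeas : Measurable f := by fun_prop
  have hdmeas : Measurable fun l => ENNReal.ofReal |d l| := by fun_prop
  have hHmeas : Measurable Hfun := by
    unfold Hfun; fun_prop
  -- derivative
  have hderiv : ∀ l : ℝ, HasDerivAt f (d l) l := by
    intro l
    have h1 : HasDerivAt (fun l : ℝ => 1 + l ^ 2) (2 * l) l := by
      simpa using ((hasDerivAt_pow 2 l).const_add 1)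
    have := h1.inv (ne_of_gt (hpos l))
    simpa [hfdef, hddef, one_div, Pi.inv_def] using this
  -- density identity on Ioi 0
  have hdens : ∀ l ∈ Ioi (0:ℝ),
      ENNReal.ofReal ((2 / Real.pi) * (1 + l ^ 2)⁻¹)
        = ENNReal.ofReal |d l| * Hfun (f l) := by
    intro l hl
    have hl0 : (0:ℝ) < l := hl
    have h1 : f l * (1 - f l) = l ^ 2 / (1 + l ^ 2) ^ 2 := by
      have hne : (1:ℝ) + l ^ 2 ≠ 0 := (hpos l).ne'
      simp only [hfdef]
      field_simp
      ring
    have h2 : Real.sqrt (f l * (1 - f l)) = l / (1 + l ^ 2) := by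
      rw [h1]
      rw [← div_pow]
      exact Real.sqrt_sq (by positivity)
    have h3 : |d l| = 2 * l / (1 + l ^ 2) ^ 2 := by
      rw [hddef, abs_div, abs_neg, abs_of_pos (by positivity), abs_of_pos (by positivity)]
    rw [Hfun, ← ENNReal.ofReal_mul (by positivity)]
    congr 1
    rw [h2, h3]
    have hπ := Real.pi_pos
    field_simp
  -- injectivity
  have hinj : InjOn f (Ioi 0) := by
    intro a ha b hb hab
    have ha' : (1:ℝ) + a ^ 2 ≠ 0 := (hpos a).ne'
    have hb' : (1:ℝ) + b ^ 2 ≠ 0 := (hpos b).ne'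
    have h2 : a ^ 2 = b ^ 2 := by
      simp only [hfdef] at hab
      field_simp at hab
      linarith
    have h3 : (a - b) * (a + b) = 0 := by nlinarith
    rcases mul_eq_zero.mp h3 with h | h
    · linarith
    · have := mem_Ioi.mp ha
      have := mem_Ioi.mp hb
      linarith
  -- image
  have himg : f '' Ioi 0 = Ioo (0:ℝ) 1 := by
    ext k
    constructor
    · rintro ⟨l, hl, rfl⟩
      have hl0 : (0:ℝ) < l := hl
      constructor
      · simp only [hfdef]
        positivity
      · simp only [hfdef]
        rw [div_lt_one (hpos l)]
        nlinarith
    · rintro ⟨hk0, hk1⟩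
      refine ⟨Real.sqrt ((1 - k) / k), ?_, ?_⟩
      · exact Real.sqrt_pos.mpr (div_pos (by linarith) hk0)
      · have : Real.sqrt ((1 - k) / k) ^ 2 = (1 - k) / k :=
          Real.sq_sqrt (le_of_lt (div_pos (by linarith) hk0))
        rw [hfdef]
        simp only [this]
        field_simp
        ring
  -- main computation
  calc Measure.map f ((volume.restrict (Ioi (0:ℝ))).withDensity
          (fun l => ENNReal.ofReal ((2 / Real.pi) * (1 + l ^ 2)⁻¹)))
      = Measure.map f ((volume.restrict (Ioi (0:ℝ))).withDensity
          (fun l => ENNReal.ofReal |d l| * Hfun (f l))) := by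
        congr 1
        apply withDensity_congr_ae
        filter_upwards [ae_restrict_mem measurableSet_Ioi] with l hl
        exact hdens l hl
    _ = Measure.map f (((volume.restrict (Ioi (0:ℝ))).withDensity
          (fun l => ENNReal.ofReal |d l|)).withDensity (Hfun ∘ f)) := by
        rw [← withDensity_mul _ hdmeas (hHmeas.comp hfmeas)]
        rfl
    _ = (Measure.map f ((volume.restrict (Ioi (0:ℝ))).withDensity
          (fun l => ENNReal.ofReal |d l|))).withDensity Hfun := by
        exact map_withDensity_comp _ hfmeas hHmeas
    _ = (volume.restrict (f '' Ioi 0)).withDensity Hfun := by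
        congr 1
        have : ∀ l ∈ Ioi (0:ℝ), HasFDerivWithinAt f
            ((1 : ℝ →L[ℝ] ℝ).smulRight (d l)) (Ioi 0) l := fun l _ =>
          ((hderiv l).hasFDerivAt).hasFDerivWithinAt
        have h := MeasureTheory.map_withDensity_abs_det_fderiv_eq_addHaar volume
          measurableSet_Ioi.nullMeasurableSet this hinj
        simpa [ContinuousLinearMap.det_toSpanSingleton] using h
    _ = (volume.restrict (Ioo (0:ℝ) 1)).withDensity Hfun := by rw [himg]
end
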